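/- For every real number μ and every ε₂ > −0.6, the Kolmogorov distance between the Gaussian distributions N(μ,1) and N(μ,1+ε₂) satisfies d_K(N(μ,1), N(μ,1+ε₂)) ≤ |ε₂|/√(2eπ). -/

import Mathlib

/-!
After standardizing, the two cdfs at `t` are `Φ(a)` and `Φ(a / σ)` with `a = t - μ`,
`σ = √(1 + ε₂)`. Their difference is the integral of the standard density `φ` between two points
of the same sign; `φ` is largest at the one nearer `0`, say `u`, and the interval has length
`(r - 1)|u|` with `r = max σ σ⁻¹`. Since `|u| φ(u) ≤ 1 / √(2eπ)`, the distance is at most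
`(r - 1) / √(2eπ)`, and `r - 1 ≤ |ε₂|` as soon as `σ² + σ ≥ 1`.
-/

open MeasureTheory ProbabilityTheory Real
open scoped NNReal

namespace Real

lemma mul_exp_neg_sq_div_two_le (x : ℝ) : x * exp (-x ^ 2 / 2) ≤ exp (-1 / 2) := by
  have hx : x ≤ exp ((x ^ 2 - 1) / 2) := by
    nlinarith [add_one_le_exp ((x ^ 2 - 1) / 2), sq_nonneg (x - 1)]
  calc x * exp (-x ^ 2 / 2) ≤ exp ((x ^ 2 - 1) / 2) * exp (-x ^ 2 / 2) := by gcongr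
    _ = exp (-1 / 2) := by rw [← exp_add]; ring_nf

end Real

namespace ProbabilityTheory

lemma cdf_gaussianReal_eq_integral (μ : ℝ) {v : ℝ≥0} (hv : v ≠ 0) (x : ℝ) :
    cdf (gaussianReal μ v) x = ∫ z in Set.Iic x, gaussianPDFReal μ v z := by
  rw [cdf_eq_real, measureReal_def, gaussianReal_apply_eq_integral μ hv,
    ENNReal.toReal_ofReal (setIntegral_nonneg measurableSet_Iic
      fun z _ ↦ gaussianPDFReal_nonneg μ v z)]

lemma cdf_gaussianReal_sub_cdf (μ : ℝ) {v : ℝ≥0} (hv : v ≠ 0) (x y : ℝ) :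
    cdf (gaussianReal μ v) y - cdf (gaussianReal μ v) x
      = ∫ z in x..y, gaussianPDFReal μ v z := by
  rw [cdf_gaussianReal_eq_integral μ hv, cdf_gaussianReal_eq_integral μ hv,
    intervalIntegral.integral_Iic_sub_Iic (integrable_gaussianPDFReal μ v).integrableOn
      (integrable_gaussianPDFReal μ v).integrableOn]

lemma cdf_gaussianReal_eq_standard (μ : ℝ) {v : ℝ≥0} (hv : v ≠ 0) (t : ℝ) :
    cdf (gaussianReal μ v) t = cdf (gaussianReal 0 1) ((t - μ) / √v) := by
  have hσ : 0 < √(v : ℝ) := by positivity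
  have hstd : (gaussianReal μ v).map (fun x ↦ (x - μ) / √v) = gaussianReal 0 1 := by
    rw [show (fun x ↦ (x - μ) / √v) = (· / √v) ∘ (· - μ) from rfl,
      ← Measure.map_map (by fun_prop) (by fun_prop), gaussianReal_map_sub_const,
      gaussianReal_map_div_const]
    congr 1
    · simp
    · ext; simp [sq_sqrt v.coe_nonneg, hv]
  have hpre : (fun x ↦ (x - μ) / √v) ⁻¹' Set.Iic ((t - μ) / √v) = Set.Iic t := by
    ext x; simp [div_le_div_iff_of_pos_right hσ]
  rw [cdf_eq_real, cdf_eq_real, ← hstd, map_measureReal_apply (by fun_prop) measurableSet_Iic,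
    hpre]

lemma gaussianPDFReal_le_of_abs_sub_le (μ : ℝ) (v : ℝ≥0) {x y : ℝ} (h : |y - μ| ≤ |x - μ|) :
    gaussianPDFReal μ v x ≤ gaussianPDFReal μ v y := by
  have hsq : (y - μ) ^ 2 ≤ (x - μ) ^ 2 := sq_le_sq.2 h
  simp only [gaussianPDFReal]
  gcongr

lemma abs_mul_gaussianPDFReal_le (x : ℝ) :
    |x| * gaussianPDFReal 0 1 x ≤ 1 / √(2 * exp 1 * π) := by
  have hconst : 1 / √(2 * exp 1 * π) = exp (-1 / 2) * (√(2 * π))⁻¹ := by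
    rw [show 2 * exp 1 * π = exp 1 * (2 * π) by ring, sqrt_mul (exp_pos 1).le, ← exp_half,
      neg_div, exp_neg]
    field_simp
  simp only [hconst, gaussianPDFReal, sub_zero, NNReal.coe_one, mul_one]
  rw [← sq_abs x]
  calc |x| * ((√(2 * π))⁻¹ * exp (-|x| ^ 2 / 2))
      = |x| * exp (-|x| ^ 2 / 2) * (√(2 * π))⁻¹ := by ring
    _ ≤ exp (-1 / 2) * (√(2 * π))⁻¹ := by gcongr; exact mul_exp_neg_sq_div_two_le |x|

lemma abs_cdf_gaussianReal_mul_sub_cdf_le {r : ℝ} (hr : 1 ≤ r) (u : ℝ) :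
    |cdf (gaussianReal 0 1) (r * u) - cdf (gaussianReal 0 1) u|
      ≤ (r - 1) / √(2 * exp 1 * π) := by
  have hmax : ∀ x ∈ Set.uIoc u (r * u), ‖gaussianPDFReal 0 1 x‖ ≤ gaussianPDFReal 0 1 u := by
    intro x hx
    rw [Real.norm_of_nonneg (gaussianPDFReal_nonneg 0 1 x)]
    refine gaussianPDFReal_le_of_abs_sub_le 0 1 ?_
    rw [sub_zero, sub_zero, ← sq_le_sq]
    rcases Set.mem_uIoc.1 hx with ⟨hux, hxr⟩ | ⟨hrx, hxu⟩
    · have hu : 0 < u := by nlinarith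
      nlinarith
    · have hu : u < 0 := by nlinarith
      nlinarith
  calc |cdf (gaussianReal 0 1) (r * u) - cdf (gaussianReal 0 1) u|
      = ‖∫ x in u..r * u, gaussianPDFReal 0 1 x‖ := by
        rw [cdf_gaussianReal_sub_cdf 0 one_ne_zero, Real.norm_eq_abs]
    _ ≤ gaussianPDFReal 0 1 u * |r * u - u| :=
        intervalIntegral.norm_integral_le_of_norm_le_const hmax
    _ = (r - 1) * (|u| * gaussianPDFReal 0 1 u) := by
        rw [show r * u - u = (r - 1) * u by ring, abs_mul, abs_of_nonneg (sub_nonneg.2 hr)]; ring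
    _ ≤ (r - 1) * (1 / √(2 * exp 1 * π)) :=
        mul_le_mul_of_nonneg_left (abs_mul_gaussianPDFReal_le u) (by linarith)
    _ = (r - 1) / √(2 * exp 1 * π) := by ring

end ProbabilityTheory

/-- For `ε₂ > −0.6`, the Kolmogorov distance between the Gaussians `N(μ,1)` and
`N(μ,1+ε₂)` is at most `|ε₂|/√(2eπ)`. -/
theorem kolmogorov_dist_gaussian_variance_shift (μ : ℝ) (ε₂ : ℝ) (hε₂ : -0.6 < ε₂) :
    (⨆ t : ℝ, |cdf (gaussianReal μ 1) t - cdf (gaussianReal μ ((1 + ε₂).toNNReal)) t|)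
      ≤ |ε₂| / Real.sqrt (2 * Real.exp 1 * π) := by
  have hv : 0 < 1 + ε₂ := by norm_num at hε₂ ⊢; linarith
  set σ := √(1 + ε₂) with hσ
  have hσ_pos : 0 < σ := sqrt_pos.2 hv
  have hσ_sq : σ ^ 2 = 1 + ε₂ := sq_sqrt hv.le
  refine ciSup_le fun t ↦ ?_
  rw [cdf_gaussianReal_eq_standard μ one_ne_zero, cdf_gaussianReal_eq_standard μ (Real.toNNReal_pos.2 hv).ne',
    Real.coe_toNNReal _ hv.le, NNReal.coe_one, sqrt_one, div_one, ← hσ]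
  rcases le_total 1 σ with hσ1 | hσ1
  · have hdil : σ - 1 ≤ |ε₂| := by rw [abs_of_nonneg (by nlinarith)]; nlinarith
    have hdist := abs_cdf_gaussianReal_mul_sub_cdf_le hσ1 ((t - μ) / σ)
    rw [mul_div_cancel₀ _ hσ_pos.ne'] at hdist
    exact hdist.trans (by gcongr)
  · -- `σ⁻¹ - 1 ≤ 1 - σ²` reduces to `σ² + σ ≥ 1` (`σ` at least the inverse golden ratio),
    -- which is what `ε₂ > -0.6` guarantees.
    have hdil : σ⁻¹ - 1 ≤ |ε₂| := by
      rw [abs_of_nonpos (by nlinarith), inv_eq_one_div, div_sub_one hσ_pos.ne',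
        div_le_iff₀ hσ_pos]
      have hgolden : 1 ≤ σ ^ 2 + σ := by norm_num at hε₂; nlinarith
      nlinarith [mul_nonneg (sub_nonneg.2 hσ1) (sub_nonneg.2 hgolden)]
    have hdist := abs_cdf_gaussianReal_mul_sub_cdf_le (one_le_inv₀ hσ_pos |>.2 hσ1) (t - μ)
    rw [inv_mul_eq_div, abs_sub_comm] at hdist
    exact hdist.trans (by gcongr)
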